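/- arXiv:2306.11997 — 5 statements merged into one kernel-verified Lean document; each statement's English description precedes it below -/
import Mathlib

section
/- Let p ≡ 1 (mod 6) be a prime, let ω be a generator of the multiplicative group of the field Z_p, and set ε = ω^{(p−1)/6}. Then the (p−1)/6 blocks {(0,0), (1,ω^i), (1,ε²·ω^i), (1,ε⁴·ω^i)} for 0 ≤ i < (p−1)/6 form a (G,H,4,1)-difference family over G = Z_2 × Z_p with H = Z_2 × {0}; in particular, a (2p,2,4,1)-CDF exists for every prime p ≡ 1 (mod 6). -/
/-- The multiset of differences `f - f'` (with `f ≠ f'`) from a finset `F`. -/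
def blockDiffs {G : Type*} [AddGroup G] [DecidableEq G] (F : Finset G) : Multiset G :=
  ((F ×ˢ F).filter fun p => p.1 ≠ p.2).val.map fun p => p.1 - p.2

/-- A `(gh,h,k,1)`-CDF (cyclic relative difference family): a family `𝓕` of
`k`-element subsets of `Z_{gh}` (base blocks, possibly with repetitions) such that
the multiset of differences from all base blocks contains every element of
`Z_{gh}` outside the subgroup `H = g·Z_{gh}` (of order `h`) exactly once and
contains no element of `H`. -/
def IsCDF (g h k : ℕ) (𝓕 : Multiset (Finset (ZMod (g * h)))) : Prop :=
  (∀ F ∈ 𝓕, F.card = k) ∧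
  (∀ x : ZMod (g * h), x ∈ AddSubgroup.zmultiples ((g : ZMod (g * h))) →
    (𝓕.bind blockDiffs).count x = 0) ∧
  (∀ x : ZMod (g * h), x ∉ AddSubgroup.zmultiples ((g : ZMod (g * h))) →
    (𝓕.bind blockDiffs).count x = 1)
/-- A `(G,H,k,1)`-difference family over a general additive group. -/
def IsDF {G : Type*} [AddGroup G] [DecidableEq G] (H : AddSubgroup G) (k : ℕ)
    (𝓕 : Multiset (Finset G)) : Prop :=
  (∀ F ∈ 𝓕, F.card = k) ∧
  (∀ x : G, x ∈ H → (𝓕.bind blockDiffs).count x = 0) ∧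
  (∀ x : G, x ∉ H → (𝓕.bind blockDiffs).count x = 1)

/-!
Write `p - 1 = 6n` and `ε = ω ^ n`, a primitive sixth root of unity, so that `ε ^ 3 = -1` and
`ε ^ 2 - ε + 1 = 0`. In the block `{(0,0), (1,x), (1,ε²x), (1,ε⁴x)}` the six differences with
first coordinate `1` are `±ε^(2a) x`, i.e. `ε^j x` for `j < 6`, and the six with first coordinate
`0` are `(ε² - 1) ε^j x` for `j < 6`, because `ε⁴ - 1 = ε (ε² - 1)` and `ε⁴ - ε² = ε² (ε² - 1)`.
Over the blocks `x = ω ^ i`, `i < n`, the products `ε^j ω^i = ω^(nj+i)` run exactly once through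
`(ZMod p)ˣ`, so every element with nonzero second coordinate is a difference exactly once.
The cyclic family is the image under the Chinese remainder isomorphism
`ZMod 2 × ZMod p ≃+ ZMod (2p)`, which carries `ZMod 2 × {0}` onto the multiples of `p`.
-/

lemma Multiset.bind_range_map_range_mul {α : Type*} (f : ℕ → α) (m n : ℕ) :
    ((range n).bind fun i => (range m).map fun j => f (n * j + i)) = (range (n * m)).map f := by
  rw [bind_map_comm]
  induction m with
  | zero => simp
  | succ m ih =>
    rw [range_succ, cons_bind, ih, Nat.mul_succ, range_add, map_add, map_map, add_comm]
    rfl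

lemma Multiset.count_map_prodMk {α β : Type*} [DecidableEq α] [DecidableEq β]
    (a : α) (s : Multiset β) (z : α × β) :
    (s.map (Prod.mk a)).count z = if z.1 = a then s.count z.2 else 0 := by
  obtain ⟨c, y⟩ := z
  split_ifs with h
  · subst h
    exact count_map_eq_count' _ _ (Prod.mk_right_injective c) y
  · simp [Ne.symm h]

lemma blockDiffs_insert_insert_insert_singleton {G : Type*} [AddGroup G] [DecidableEq G]
    {a b c d : G}
    (hab : a ≠ b) (hac : a ≠ c) (had : a ≠ d) (hbc : b ≠ c) (hbd : b ≠ d) (hcd : c ≠ d) :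
    blockDiffs ({a, b, c, d} : Finset G) =
      {a - d, b - d, c - d, a - c, b - c, d - c, a - b, c - b, d - b, b - a, c - a, d - a} := by
  have hval : ({a, b, c, d} : Finset G).val = a ::ₘ b ::ₘ c ::ₘ {d} := by
    rw [Finset.insert_val_of_notMem (by simp [hab, hac, had]),
      Finset.insert_val_of_notMem (by simp [hbc, hbd]),
      Finset.insert_val_of_notMem (by simp [hcd]), Finset.singleton_val]
  unfold blockDiffs
  rw [Finset.filter_val, Finset.product_val, hval]
  simp [hab, hac, had, hbc, hbd, hcd, hab.symm, hac.symm, had.symm, hbc.symm, hbd.symm, hcd.symm,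
    ← Multiset.cons_zero]

lemma IsPrimitiveRoot.count_map_range_pow_mul {F : Type*} [Field F] [Fintype F] [DecidableEq F]
    {ω : F} (hω : IsPrimitiveRoot ω (Fintype.card F - 1)) {α : F} (hα : α ≠ 0) (y : F) :
    ((Multiset.range (Fintype.card F - 1)).map fun k => ω ^ k * α).count y =
      if y = 0 then 0 else 1 := by
  have hN : NeZero (Fintype.card F - 1) := ⟨by have := Fintype.one_lt_card (α := F); omega⟩
  split_ifs with hy
  · subst hy
    simp [hα, hω.ne_zero hN.out]
  · obtain ⟨k, hk, hωk⟩ := hω.eq_pow_of_pow_eq_one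
      (FiniteField.pow_card_sub_one_eq_one (y / α) (div_ne_zero hy hα))
    refine Multiset.count_eq_one_of_mem ((Multiset.nodup_range _).map_on ?_) ?_
    · exact fun i hi j hj h => hω.injOn_pow_mul hα (by simpa using hi) (by simpa using hj) h
    · exact Multiset.mem_map.mpr
        ⟨k, Multiset.mem_range.mpr hk, by rw [hωk, div_mul_cancel₀ y hα]⟩

namespace IsPrimitiveRoot

variable {F : Type*} [Field F] {ε : F}

lemma pow_three_eq_neg_one_of_six (hε : IsPrimitiveRoot ε 6) : ε ^ 3 = -1 :=
  (hε.pow (by norm_num) (by norm_num : 6 = 3 * 2)).eq_neg_one_of_two_right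

lemma sq_ne_one_of_six (hε : IsPrimitiveRoot ε 6) : ε ^ 2 ≠ 1 :=
  hε.pow_ne_one_of_pos_of_lt (by norm_num) (by norm_num)

lemma sq_sub_self_add_one_of_six (hε : IsPrimitiveRoot ε 6) : ε ^ 2 - ε + 1 = 0 := by
  have hε1 : ε + 1 ≠ 0 := fun h =>
    hε.sq_ne_one_of_six (by rw [eq_neg_of_add_eq_zero_left h]; ring)
  have : (ε + 1) * (ε ^ 2 - ε + 1) = 0 := by linear_combination hε.pow_three_eq_neg_one_of_six
  exact (mul_eq_zero.mp this).resolve_left hε1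

end IsPrimitiveRoot

section SixthRootBlock

variable {F : Type*} [Field F] {ε x : F}

lemma IsPrimitiveRoot.even_pow_mul_pairwise_ne (hε : IsPrimitiveRoot ε 6) (hx : x ≠ 0) :
    x ≠ ε ^ 2 * x ∧ x ≠ ε ^ 4 * x ∧ ε ^ 2 * x ≠ ε ^ 4 * x := by
  have h2 := hε.sq_ne_one_of_six
  have h4 : ε ^ 4 ≠ 1 := hε.pow_ne_one_of_pos_of_lt (by norm_num) (by norm_num)
  have hε0 : ε ^ 2 ≠ 0 := pow_ne_zero _ (hε.ne_zero (by norm_num))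
  refine ⟨fun h => h2 ?_, fun h => h4 ?_, fun h => h2 ?_⟩
  · exact (mul_left_eq_self₀.mp h.symm).resolve_right hx
  · exact (mul_left_eq_self₀.mp h.symm).resolve_right hx
  · have : ε ^ 2 * ε ^ 2 = ε ^ 2 * 1 := by
      rw [← pow_add, mul_one]; exact (mul_right_cancel₀ hx h).symm
    exact mul_left_cancel₀ hε0 this

variable [DecidableEq F]

def sixthRootBlock (ε x : F) : Finset (ZMod 2 × F) :=
  {(0, 0), (1, x), (1, ε ^ 2 * x), (1, ε ^ 4 * x)}

lemma card_sixthRootBlock (hε : IsPrimitiveRoot ε 6) (hx : x ≠ 0) :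
    (sixthRootBlock ε x).card = 4 := by
  obtain ⟨h02, h04, h24⟩ := hε.even_pow_mul_pairwise_ne hx
  simp [sixthRootBlock, h02, h04, h24]

lemma blockDiffs_sixthRootBlock (hε : IsPrimitiveRoot ε 6) (hx : x ≠ 0) :
    blockDiffs (sixthRootBlock ε x) =
      (Multiset.range 6).map (fun j => ((0 : ZMod 2), ε ^ j * x * (ε ^ 2 - 1))) +
      (Multiset.range 6).map (fun j => ((1 : ZMod 2), ε ^ j * x)) := by
  obtain ⟨h02, h04, h24⟩ := hε.even_pow_mul_pairwise_ne hx
  have h3 := hε.pow_three_eq_neg_one_of_six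
  rw [sixthRootBlock, blockDiffs_insert_insert_insert_singleton (by simp) (by simp) (by simp)
    (by simpa using h02) (by simpa using h04) (by simpa using h24)]
  rw [show Multiset.range 6 = {0, 1, 2, 3, 4, 5} from rfl]
  simp only [Prod.mk_sub_mk, sub_self, sub_zero, zero_sub, show (-1 : ZMod 2) = 1 from rfl,
    Multiset.insert_eq_cons, Multiset.map_cons, Multiset.map_singleton, pow_zero, pow_one, one_mul]
  rw [show ε ^ 4 * x - ε ^ 2 * x = ε ^ 2 * x * (ε ^ 2 - 1) by ring,
    show ε ^ 4 * x - x = ε * x * (ε ^ 2 - 1) by linear_combination x * (ε - 1) * h3,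
    show ε ^ 2 * x - x = x * (ε ^ 2 - 1) by ring,
    show ε ^ 2 * x - ε ^ 4 * x = ε ^ 5 * x * (ε ^ 2 - 1) by
      linear_combination (ε ^ 2 - ε ^ 4) * x * h3,
    show x - ε ^ 2 * x = ε ^ 3 * x * (ε ^ 2 - 1) by linear_combination (1 - ε ^ 2) * x * h3,
    show x - ε ^ 4 * x = ε ^ 4 * x * (ε ^ 2 - 1) by linear_combination (1 - ε ^ 3) * x * h3,
    show -x = ε ^ 3 * x by linear_combination -x * h3,
    show -(ε ^ 2 * x) = ε ^ 5 * x by linear_combination -ε ^ 2 * x * h3,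
    show -(ε ^ 4 * x) = ε * x by linear_combination -ε * x * h3]
  simp only [← Multiset.singleton_add]
  abel

end SixthRootBlock

lemma bind_blockDiffs_sixthRootBlocks {F : Type*} [Field F] [DecidableEq F] {n : ℕ} (hn : 0 < n)
    {ω : F} (hω : IsPrimitiveRoot ω (6 * n)) :
    ((Multiset.range n).map fun i => sixthRootBlock (ω ^ n) (ω ^ i)).bind blockDiffs =
      ((Multiset.range (6 * n)).map fun k => ω ^ k * ((ω ^ n) ^ 2 - 1)).map (Prod.mk 0) +
      ((Multiset.range (6 * n)).map (ω ^ ·)).map (Prod.mk 1) := by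
  have hε : IsPrimitiveRoot (ω ^ n) 6 := hω.pow (by omega) (mul_comm 6 n)
  have hx : ∀ i, ω ^ i ≠ 0 := fun i => pow_ne_zero i (hω.ne_zero (by omega))
  simp only [Multiset.bind_map, blockDiffs_sixthRootBlock hε (hx _), Multiset.bind_add,
    Multiset.map_map, Function.comp_def, mul_comm 6 n]
  rw [← Multiset.bind_range_map_range_mul _ 6 n, ← Multiset.bind_range_map_range_mul _ 6 n]
  simp only [pow_add, pow_mul]

theorem isDF_sixthRootBlocks {F : Type*} [Field F] [Fintype F] [DecidableEq F] {n : ℕ}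
    (hF : Fintype.card F = 6 * n + 1) {ω : F} (hω : IsPrimitiveRoot ω (6 * n)) :
    IsDF ((⊤ : AddSubgroup (ZMod 2)).prod ⊥) 4
      ((Multiset.range n).map fun i => sixthRootBlock (ω ^ n) (ω ^ i)) := by
  have hn : 0 < n := by
    have := Fintype.one_lt_card (α := F); omega
  have hε : IsPrimitiveRoot (ω ^ n) 6 := hω.pow (by omega) (mul_comm 6 n)
  have hω' : IsPrimitiveRoot ω (Fintype.card F - 1) := by rwa [hF, Nat.add_sub_cancel]
  have hD : (ω ^ n) ^ 2 - 1 ≠ 0 := sub_ne_zero.mpr hε.sq_ne_one_of_six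
  have hcount : ∀ z : ZMod 2 × F,
      (((Multiset.range n).map fun i => sixthRootBlock (ω ^ n) (ω ^ i)).bind blockDiffs).count z =
        if z.2 = 0 then 0 else 1 := by
    rintro ⟨c, y⟩
    have hpow : ((Multiset.range (Fintype.card F - 1)).map (ω ^ ·)).count y =
        if y = 0 then 0 else 1 := by
      simpa using hω'.count_map_range_pow_mul one_ne_zero y
    rw [bind_blockDiffs_sixthRootBlocks hn hω, ← Nat.add_sub_cancel (6 * n) 1, ← hF,
      Multiset.count_add, Multiset.count_map_prodMk, Multiset.count_map_prodMk,
      hω'.count_map_range_pow_mul hD, hpow]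
    rcases (show ∀ c : ZMod 2, c = 0 ∨ c = 1 by decide) c with rfl | rfl <;> simp
  refine ⟨?_, fun z hz => ?_, fun z hz => ?_⟩
  · simp only [Multiset.mem_map, Multiset.mem_range]
    rintro _ ⟨i, -, rfl⟩
    exact card_sixthRootBlock hε (pow_ne_zero i (hω.ne_zero (by omega)))
  · rw [hcount, if_pos (AddSubgroup.mem_bot.mp (AddSubgroup.mem_prod.mp hz).2)]
  · rw [hcount, if_neg]
    simpa [AddSubgroup.mem_prod] using hz

section Transfer

variable {G G' : Type*} [AddGroup G] [AddGroup G'] [DecidableEq G] [DecidableEq G']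

lemma blockDiffs_map (e : G ≃+ G') (F : Finset G) :
    blockDiffs (F.map e.toEquiv.toEmbedding) = (blockDiffs F).map e := by
  unfold blockDiffs
  rw [← Finset.prodMap_map_product, Finset.filter_map, Finset.map_val, Multiset.map_map,
    Multiset.map_map]
  refine congrArg₂ _ ?_ (congrArg _ (Finset.filter_congr fun q _ => ?_))
  · funext q
    simp
  · simp [e.injective.eq_iff]

lemma IsDF.map (e : G ≃+ G') {H : AddSubgroup G} {k : ℕ} {𝓕 : Multiset (Finset G)}
    (h : IsDF H k 𝓕) : IsDF (H.map e) k (𝓕.map (Finset.map e.toEquiv.toEmbedding)) := by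
  obtain ⟨hcard, hH, hHc⟩ := h
  have hcount : ∀ x, ((𝓕.map (Finset.map e.toEquiv.toEmbedding)).bind blockDiffs).count x =
      (𝓕.bind blockDiffs).count (e.symm x) := fun x => by
    rw [Multiset.bind_map, funext (blockDiffs_map e), ← Multiset.map_bind,
      ← e.apply_symm_apply x, Multiset.count_map_eq_count' _ _ e.injective, e.apply_symm_apply]
  refine ⟨?_, fun x hx => ?_, fun x hx => ?_⟩
  · simp only [Multiset.mem_map]
    rintro _ ⟨F, hF, rfl⟩
    rw [Finset.card_map, hcard F hF]
  · rw [hcount]; exact hH _ (AddSubgroup.mem_map_equiv.mp hx)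
  · rw [hcount]; exact hHc _ (mt AddSubgroup.mem_map_equiv.mpr hx)

end Transfer

lemma isCDF_iff_isDF (g h k : ℕ) (𝓕 : Multiset (Finset (ZMod (g * h)))) :
    IsCDF g h k 𝓕 ↔ IsDF (AddSubgroup.zmultiples (g : ZMod (g * h))) k 𝓕 := Iff.rfl

lemma ZMod.top_prod_bot_eq_zmultiples (R : Type*) [AddGroup R] :
    (⊤ : AddSubgroup (ZMod 2)).prod (⊥ : AddSubgroup R) =
      AddSubgroup.zmultiples ((1 : ZMod 2), (0 : R)) := by
  ext ⟨c, y⟩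
  simp only [AddSubgroup.mem_prod, AddSubgroup.mem_top, AddSubgroup.mem_bot, true_and,
    AddSubgroup.mem_zmultiples_iff, Prod.smul_mk, smul_zero, Prod.mk.injEq]
  constructor
  · rintro rfl
    exact ⟨c.val, by simp, rfl⟩
  · rintro ⟨k, -, rfl⟩
    rfl

def ZMod.prodAddEquivOfOdd {p : ℕ} (hp : Odd p) : ZMod 2 × ZMod p ≃+ ZMod (p * 2) :=
  AddEquiv.prodComm.trans (ZMod.chineseRemainder (Nat.coprime_two_right.mpr hp)).symm.toAddEquiv

lemma ZMod.prodAddEquivOfOdd_one_zero {p : ℕ} (hp : Odd p) :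
    ZMod.prodAddEquivOfOdd hp (1, 0) = (p : ZMod (p * 2)) := by
  refine ((ZMod.chineseRemainder (Nat.coprime_two_right.mpr hp)).symm_apply_eq).mpr ?_
  rw [map_natCast]
  exact Prod.ext (ZMod.natCast_self p).symm (ZMod.natCast_eq_one_iff_odd.mpr hp).symm

lemma ZMod.map_prodAddEquivOfOdd_prod_top_bot {p : ℕ} (hp : Odd p) :
    ((⊤ : AddSubgroup (ZMod 2)).prod (⊥ : AddSubgroup (ZMod p))).map
      (ZMod.prodAddEquivOfOdd hp : ZMod 2 × ZMod p →+ ZMod (p * 2)) =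
      AddSubgroup.zmultiples (p : ZMod (p * 2)) := by
  rw [ZMod.top_prod_bot_eq_zmultiples, AddMonoidHom.map_zmultiples, AddMonoidHom.coe_coe,
    ZMod.prodAddEquivOfOdd_one_zero]

/-- Let `p ≡ 1 (mod 6)` be a prime, `ω` a generator of the multiplicative group of
`Z_p`, and `ε = ω^((p-1)/6)`. Then the blocks
`{(0,0), (1,ω^i), (1,ε²ω^i), (1,ε⁴ω^i)}`, `0 ≤ i < (p-1)/6`, form a
`(G,H,4,1)`-DF over `G = Z_2 × Z_p` relative to `H = Z_2 × {0}`; in particular a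
`(2p,2,4,1)`-CDF exists. -/
theorem stmt_3 (p : ℕ) (hp : p.Prime) (hpmod : p % 6 = 1)
    (ω : (ZMod p)ˣ) (hω : ∀ u : (ZMod p)ˣ, u ∈ Subgroup.zpowers ω)
    (ε : (ZMod p)ˣ) (hε : ε = ω ^ ((p - 1) / 6)) :
    IsDF ((⊤ : AddSubgroup (ZMod 2)).prod (⊥ : AddSubgroup (ZMod p))) 4
      ((Multiset.range ((p - 1) / 6)).map fun i =>
        ({((0 : ZMod 2), (0 : ZMod p)),
          ((1 : ZMod 2), ((ω : ZMod p)) ^ i),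
          ((1 : ZMod 2), ((ε ^ 2 : (ZMod p)ˣ) : ZMod p) * ((ω : ZMod p)) ^ i),
          ((1 : ZMod 2), ((ε ^ 4 : (ZMod p)ˣ) : ZMod p) * ((ω : ZMod p)) ^ i)} :
            Finset (ZMod 2 × ZMod p))) ∧
    ∃ 𝓕 : Multiset (Finset (ZMod (p * 2))), IsCDF p 2 4 𝓕 := by
  have : Fact p.Prime := ⟨hp⟩
  set n := (p - 1) / 6
  have hpn : p = 6 * n + 1 := by omega
  have hωn : IsPrimitiveRoot (ω : ZMod p) (6 * n) := by
    rw [IsPrimitiveRoot.coe_units_iff, ← Nat.sub_eq_of_eq_add hpn, ← ZMod.card_units p,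
      ← Nat.card_eq_fintype_card, ← orderOf_eq_card_of_forall_mem_zpowers hω]
    exact IsPrimitiveRoot.orderOf ω
  have hDF := isDF_sixthRootBlocks (by rw [ZMod.card, hpn]) hωn
  have hodd : Odd p := hp.odd_of_ne_two (by omega)
  subst hε
  push_cast
  have hCDF := hDF.map (ZMod.prodAddEquivOfOdd hodd)
  rw [ZMod.map_prodAddEquivOfOdd_prod_top_bot hodd] at hCDF
  exact ⟨hDF, _, (isCDF_iff_isDF p 2 4 _).mpr hCDF⟩
end

section
/- There exists a (2g,2,4,1)-CDF for every positive integer g all of whose prime factors are congruent to 1 modulo 6. -/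
open Function Polynomial

section BlockDiffs

variable {G G' : Type*} [AddGroup G] [DecidableEq G] [AddGroup G']

theorem blockDiffs_singleton (a : G) : blockDiffs {a} = 0 := by
  simp [blockDiffs]

theorem blockDiffs_insert {a : G} {s : Finset G} (h : a ∉ s) :
    blockDiffs (insert a s) =
      s.val.map (a - ·) + s.val.map (· - a) + blockDiffs s := by
  have hne : ∀ x ∈ s, a ≠ x := fun x hx e => h (e ▸ hx)
  have h₁ : (s.val.map (Prod.mk a)).filter (fun p => p.1 ≠ p.2) = s.val.map (Prod.mk a) :=
    Multiset.filter_eq_self.2 fun p hp => by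
      obtain ⟨x, hx, rfl⟩ := Multiset.mem_map.1 hp
      exact hne x hx
  have h₂ : (s.val.map (·, a)).filter (fun p => p.1 ≠ p.2) = s.val.map (·, a) :=
    Multiset.filter_eq_self.2 fun p hp => by
      obtain ⟨x, hx, rfl⟩ := Multiset.mem_map.1 hp
      exact (hne x hx).symm
  rw [blockDiffs, Finset.filter_val, Finset.product_val, Finset.insert_val_of_notMem h,
    Multiset.cons_product, Multiset.product_cons, Multiset.map_cons, Multiset.filter_add,
    Multiset.filter_add, Multiset.filter_cons_of_neg _ (by simp), h₁, h₂, blockDiffs,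
    Finset.filter_val, Finset.product_val]
  simp only [Multiset.map_add, Multiset.map_map, comp_def, add_assoc]

theorem injOn_of_forall_mem_blockDiffs {s : Finset G} (f : G →+ G')
    (hf : ∀ d ∈ blockDiffs s, f d ≠ 0) : Set.InjOn f s := by
  intro a ha b hb hab
  by_contra hne
  refine hf (a - b) (Multiset.mem_map.2 ⟨(a, b), ?_, rfl⟩) (by rw [map_sub, hab, sub_self])
  simp [Finset.mem_coe.1 ha, Finset.mem_coe.1 hb, hne]

variable [DecidableEq G']

theorem blockDiffs_image (f : G →+ G') {s : Finset G} (hf : Set.InjOn f s) :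
    blockDiffs (s.image f) = (blockDiffs s).map f := by
  set P := (s ×ˢ s).filter fun p => p.1 ≠ p.2
  have hP : ((s.image f ×ˢ s.image f).filter fun p => p.1 ≠ p.2) = P.image (Prod.map f f) := by
    ext ⟨x, y⟩
    simp only [P, Finset.mem_filter, Finset.mem_product, Finset.mem_image, Prod.exists,
      Prod.map_apply, Prod.mk.injEq]
    constructor
    · rintro ⟨⟨⟨a, ha, rfl⟩, ⟨b, hb, rfl⟩⟩, hne⟩
      exact ⟨a, b, ⟨⟨ha, hb⟩, fun h => hne (h ▸ rfl)⟩, rfl, rfl⟩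
    · rintro ⟨a, b, ⟨⟨ha, hb⟩, hne⟩, rfl, rfl⟩
      exact ⟨⟨⟨a, ha, rfl⟩, ⟨b, hb, rfl⟩⟩, fun h => hne (hf ha hb h)⟩
  have hPinj : Set.InjOn (Prod.map f f) P := by
    rintro ⟨a, b⟩ hab ⟨c, d⟩ hcd h
    simp only [P, Finset.coe_filter, Finset.mem_product, Set.mem_ofPred_eq] at hab hcd
    simp only [Prod.map_apply, Prod.mk.injEq] at h
    rw [hf hab.1.1 hcd.1.1 h.1, hf hab.1.2 hcd.1.2 h.2]
  rw [blockDiffs, hP, Finset.image_val_of_injOn hPinj, Multiset.map_map, blockDiffs,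
    Multiset.map_map]
  congr 1
  ext p
  simp [map_sub]

end BlockDiffs

theorem Finset.exists_bind_range_iterate_eq_val {α : Type*} [DecidableEq α] {f : α → α} {n : ℕ}
    (hn : 0 < n) (s : Finset α) (hs : Set.MapsTo f s s)
    (hper : ∀ x ∈ s, minimalPeriod f x = n) :
    ∃ S : Multiset α, S.bind (fun x => (Multiset.range n).map (f^[·] x)) = s.val := by
  induction s using Finset.strongInduction with
  | H s ih =>
  rcases s.eq_empty_or_nonempty with rfl | ⟨x, hx⟩
  · exact ⟨0, rfl⟩
  set O := (range n).image (f^[·] x)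
  have hOval : O.val = (Multiset.range n).map (f^[·] x) := by
    rw [image_val_of_injOn, range_val]
    simpa [hper x hx] using iterate_injOn_Iio_minimalPeriod (f := f) (x := x)
  have hOs : O ⊆ s := image_subset_iff.2 fun k _ => hs.iterate k hx
  have hxO : x ∈ O := mem_image.2 ⟨0, mem_range.2 hn, rfl⟩
  -- `y = f^[n - 1] (f y)`, so `f y ∈ O` forces `y ∈ O`
  have hmaps : Set.MapsTo f ↑(s \ O) ↑(s \ O) := by
    intro y hy
    simp only [coe_sdiff, Set.mem_sdiff, mem_coe] at hy ⊢
    refine ⟨hs hy.1, fun hfy => hy.2 ?_⟩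
    obtain ⟨k, -, hk⟩ := mem_image.1 hfy
    have hy' : y = f^[(n - 1 + k) % n] x := by
      rw [← hper x hx, iterate_mod_minimalPeriod_eq, iterate_add_apply, hk, hper x hx,
        ← iterate_succ_apply, Nat.succ_eq_add_one, Nat.sub_add_cancel hn, ← hper y hy.1,
        iterate_minimalPeriod]
    exact mem_image.2 ⟨_, mem_range.2 (Nat.mod_lt _ hn), hy'.symm⟩
  obtain ⟨S, hS⟩ := ih (s \ O) (sdiff_ssubset hOs ⟨x, hxO⟩) hmaps
    fun y hy => hper y (sdiff_subset hy)
  refine ⟨x ::ₘ S, ?_⟩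
  rw [Multiset.cons_bind, hS, ← hOval, sdiff_val, add_tsub_cancel_of_le (val_le_iff.2 hOs)]

theorem Finset.val_map_mul_right_filter_ne_zero {M : Type*} [MonoidWithZero M] [Fintype M]
    [DecidableEq M] {t : M} (ht : IsUnit t) :
    (univ.filter fun x : M => x ≠ 0).val.map (· * t) = (univ.filter fun x : M => x ≠ 0).val := by
  calc (univ.filter fun x : M => x ≠ 0).val.map (· * t)
      = ((univ.filter fun x : M => x ≠ 0).map (Units.mulRight ht.unit).toEmbedding).val := by
        rw [map_val]; rfl
    _ = _ := by
        congr 1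
        ext x
        simp [mem_map_equiv]

theorem Finset.val_filter_fst_ne_zero {M : Type*} [Zero M] [Fintype M] [DecidableEq M] :
    (univ.filter fun p : M × ZMod 2 => p.1 ≠ 0).val =
      (univ.filter fun x : M => x ≠ 0).val.map (·, 0) +
        (univ.filter fun x : M => x ≠ 0).val.map (·, 1) := by
  have : (univ.filter fun p : M × ZMod 2 => p.1 ≠ 0) =
      (univ.filter fun x : M => x ≠ 0) ×ˢ univ := by
    ext
    simp
  rw [this, product_val, show (univ : Finset (ZMod 2)).val = {0, 1} from rfl,
    Multiset.insert_eq_cons, ← Multiset.cons_zero, Multiset.product_cons, Multiset.product_cons,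
    Multiset.product_zero, add_zero]

namespace ZMod

theorem exists_sq_sub_add_one_eq_zero_of_prime {p : ℕ} [hp : Fact p.Prime] (h6 : p % 6 = 1) :
    ∃ w : ZMod p, w ^ 2 - w + 1 = 0 := by
  have : NeZero (p - 1) := ⟨by have := hp.out.two_le; omega⟩
  have := HasEnoughRootsOfUnity.of_dvd (ZMod p) (show 6 ∣ p - 1 by omega)
  obtain ⟨ζ, hζ⟩ := HasEnoughRootsOfUnity.exists_primitiveRoot (ZMod p) 6
  have : NeZero ((6 : ℕ) : ZMod p) := ⟨by
    rw [Ne, natCast_eq_zero_iff]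
    intro h
    have := Nat.le_of_dvd (by norm_num) h
    have := hp.out.two_le
    omega⟩
  refine ⟨ζ, ?_⟩
  simpa [cyclotomic_six] using isRoot_cyclotomic_iff.2 hζ

theorem exists_sq_sub_add_one_eq_zero_of_prime_pow {p : ℕ} [hp : Fact p.Prime] (h6 : p % 6 = 1)
    (e : ℕ) : ∃ w : ZMod (p ^ e), w ^ 2 - w + 1 = 0 := by
  obtain ⟨w, hw⟩ := exists_sq_sub_add_one_eq_zero_of_prime h6
  obtain ⟨a, rfl⟩ := intCast_surjective w
  set F : ℤ[X] := X ^ 2 - X + 1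
  have hFa : ‖F.aeval (a : ℤ_[p])‖ < 1 := by
    have : F.aeval (a : ℤ_[p]) = ((a ^ 2 - a + 1 : ℤ) : ℤ_[p]) := by simp [F]
    rw [this, PadicInt.norm_int_lt_one_iff_dvd, ← intCast_zmod_eq_zero_iff_dvd]
    push_cast
    exact hw
  have hF'a : ‖F.derivative.aeval (a : ℤ_[p])‖ = 1 := by
    have : F.derivative.aeval (a : ℤ_[p]) = ((2 * a - 1 : ℤ) : ℤ_[p]) := by
      simp only [F, derivative_X_sq, derivative_X, derivative_one, map_add, map_sub, map_mul,
        aeval_C, aeval_X, map_zero]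
      push_cast
      simp
    rw [this]
    refine le_antisymm (PadicInt.norm_le_one _) (not_lt.1 fun h => ?_)
    rw [PadicInt.norm_int_lt_one_iff_dvd, ← intCast_zmod_eq_zero_iff_dvd] at h
    push_cast at h
    -- `(2a - 1)² = -3` in `ZMod p`, and `p ≠ 3`
    have h3 : ((3 : ℕ) : ZMod p) = 0 := by
      push_cast
      linear_combination (1 - 2 * (a : ZMod p)) * h + 4 * hw
    rw [natCast_eq_zero_iff] at h3
    have := Nat.le_of_dvd (by norm_num) h3
    have := hp.out.two_le
    omega
  obtain ⟨z, hz, -⟩ :=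
    hensels_lemma (F := F) (a := (a : ℤ_[p])) (by rw [hF'a]; simpa using hFa)
  refine ⟨PadicInt.toZModPow e z, ?_⟩
  simpa [F] using congrArg (PadicInt.toZModPow e) hz

theorem exists_sq_sub_add_one_eq_zero_of_coprime {m n : ℕ} (h : m.Coprime n)
    (hm : ∃ w : ZMod m, w ^ 2 - w + 1 = 0) (hn : ∃ w : ZMod n, w ^ 2 - w + 1 = 0) :
    ∃ w : ZMod (m * n), w ^ 2 - w + 1 = 0 := by
  obtain ⟨a, ha⟩ := hm
  obtain ⟨b, hb⟩ := hn
  refine ⟨(chineseRemainder h).symm (a, b), (chineseRemainder h).injective ?_⟩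
  ext <;> simp [ha, hb]

theorem exists_sq_sub_add_one_eq_zero {g : ℕ} (hg : ∀ p : ℕ, p.Prime → p ∣ g → p % 6 = 1) :
    ∃ w : ZMod g, w ^ 2 - w + 1 = 0 := by
  induction g using Nat.recOnPosPrimePosCoprime with
  | prime_pow p e hp he =>
    have : Fact p.Prime := ⟨hp⟩
    exact exists_sq_sub_add_one_eq_zero_of_prime_pow (hg p hp (dvd_pow_self p he.ne')) e
  | zero => exact absurd (hg 2 Nat.prime_two (dvd_zero 2)) (by norm_num)
  | one => exact ⟨0, Subsingleton.elim _ _⟩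
  | coprime a b _ _ hab iha ihb =>
    exact exists_sq_sub_add_one_eq_zero_of_coprime hab
      (iha fun p hp hpa => hg p hp (hpa.mul_right b))
      (ihb fun p hp hpb => hg p hp (hpb.mul_left a))

end ZMod

section SixthRoot

variable {R : Type*} [CommRing R] {w t : R}

theorem pow_six_eq_one_of_sq_sub_add_one_eq_zero (hw : w ^ 2 - w + 1 = 0) : w ^ 6 = 1 := by
  linear_combination (w ^ 4 + w ^ 3 - w - 1) * hw

theorem isUnit_of_sq_sub_add_one_eq_zero (hw : w ^ 2 - w + 1 = 0) : IsUnit w :=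
  .of_mul_eq_one (1 - w) (by linear_combination -hw)

theorem minimalPeriod_mul_right_eq_six (hw : w ^ 2 - w + 1 = 0) (ht : (2 - w) * t = 1)
    (h2 : IsUnit (2 : R)) {x : R} (hx : x ≠ 0) : minimalPeriod (· * w) x = 6 := by
  have hper : IsPeriodicPt (· * w) 6 x := by
    rw [IsPeriodicPt, IsFixedPt, mul_right_iterate_apply,
      pow_six_eq_one_of_sq_sub_add_one_eq_zero hw, mul_one]
  have hdvd := hper.minimalPeriod_dvd
  have hpos := hper.minimalPeriod_pos (by norm_num)
  have hfix : x * w ^ minimalPeriod (· * w) x = x := by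
    rw [← mul_right_iterate_apply, iterate_minimalPeriod]
  generalize minimalPeriod (· * w) x = m at hdvd hpos hfix
  have hm : m ≤ 6 := Nat.le_of_dvd (by norm_num) hdvd
  interval_cases m
  · exact absurd (by linear_combination (-w) * hfix + x * hw) hx
  · exact absurd (by linear_combination (-t) * hfix + (t * x) * hw - x * ht) hx
  · exact absurd (h2.mul_right_eq_zero.1 (by linear_combination -hfix + (x * (w + 1)) * hw)) hx
  all_goals first | rfl | norm_num at hdvd

variable [DecidableEq R]

def baseBlock (w t : R) : Finset (R × ZMod 2) := {(0, 0), (1, 0), (w, 0), (t, 1)}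

theorem card_baseBlock [Nontrivial R] (hw : w ^ 2 - w + 1 = 0) : (baseBlock w t).card = 4 := by
  have hw0 := (isUnit_of_sq_sub_add_one_eq_zero hw).ne_zero
  have hw1 : w ≠ 1 := by rintro rfl; norm_num at hw
  simp [baseBlock, hw0.symm, hw1.symm]

theorem blockDiffs_baseBlock [Nontrivial R] (hw : w ^ 2 - w + 1 = 0) (ht : (2 - w) * t = 1) :
    blockDiffs (baseBlock w t) =
      ((Multiset.range 6).map (w ^ ·)).map (·, 0) +
        ((Multiset.range 6).map (w ^ ·)).map (fun y => (y * t, 1)) := by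
  have hw0 := (isUnit_of_sq_sub_add_one_eq_zero hw).ne_zero
  have hw1 : w ≠ 1 := by rintro rfl; norm_num at hw
  have h₃ : ((w, 0) : R × ZMod 2) ∉ ({(t, 1)} : Finset _) := by simp
  have h₂ : ((1, 0) : R × ZMod 2) ∉ ({(w, 0), (t, 1)} : Finset _) := by simp [hw1.symm]
  have h₁ : ((0, 0) : R × ZMod 2) ∉ ({(1, 0), (w, 0), (t, 1)} : Finset _) := by simp [hw0.symm]
  rw [baseBlock, blockDiffs_insert h₁, blockDiffs_insert h₂, blockDiffs_insert h₃,
    blockDiffs_singleton, Finset.insert_val_of_notMem h₂, Finset.insert_val_of_notMem h₃]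
  simp only [Finset.singleton_val, Multiset.range_succ, Multiset.range_zero]
  have p₂ : w ^ 2 = w - 1 := by linear_combination hw
  have p₃ : w ^ 3 = -1 := by linear_combination (w + 1) * hw
  have p₄ : w ^ 4 = -w := by linear_combination (w ^ 2 + w) * hw
  have p₅ : w ^ 5 = 1 - w := by linear_combination (w ^ 3 + w ^ 2 - 1) * hw
  have q₁ : w ^ 1 * t = w - t := by linear_combination t * hw + w * ht
  have q₂ : w ^ 2 * t = t - 1 := by linear_combination t * hw - ht
  have q₃ : w ^ 3 * t = -t := by linear_combination ((w + 1) * t) * hw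
  have q₄ : w ^ 4 * t = t - w := by linear_combination (w ^ 2 + w - 1) * t * hw - w * ht
  have q₅ : w ^ 5 * t = 1 - t := by linear_combination (w ^ 3 + w ^ 2 - 1) * t * hw + ht
  have h2 : (0 - 1 : ZMod 2) = 1 := rfl
  simp only [Multiset.map_cons, Multiset.map_singleton, Multiset.map_zero, q₁, q₂, q₃, q₄, q₅]
  simp only [Prod.mk_sub_mk, p₂, p₃, p₄, p₅, h2, pow_zero, pow_one, one_mul, sub_zero, zero_sub,
    sub_self]
  simp only [← Multiset.singleton_add]
  abel

def mulFst (r : R) : R × ZMod 2 →+ R × ZMod 2 :=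
  (AddMonoidHom.mulLeft r).prodMap (AddMonoidHom.id _)

theorem injOn_mulFst_baseBlock (hw : w ^ 2 - w + 1 = 0) (ht : (2 - w) * t = 1) {r : R}
    (hr : r ≠ 0) : Set.InjOn (mulFst r) (baseBlock w t) := by
  have := nontrivial_of_ne r 0 hr
  refine injOn_of_forall_mem_blockDiffs _ fun d hd => ?_
  rw [blockDiffs_baseBlock hw ht] at hd
  rcases Multiset.mem_add.1 hd with hd | hd <;> obtain ⟨_, ⟨k, -, rfl⟩, rfl⟩ := by
    simpa only [Multiset.mem_map] using hd
  · simpa [mulFst, ((isUnit_of_sq_sub_add_one_eq_zero hw).pow k).mul_left_eq_zero] using hr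
  · simp [mulFst]

theorem card_image_mulFst_baseBlock (hw : w ^ 2 - w + 1 = 0) (ht : (2 - w) * t = 1) {r : R}
    (hr : r ≠ 0) : ((baseBlock w t).image (mulFst r)).card = 4 := by
  have := nontrivial_of_ne r 0 hr
  rw [Finset.card_image_of_injOn (injOn_mulFst_baseBlock hw ht hr), card_baseBlock hw]

theorem blockDiffs_image_mulFst_baseBlock (hw : w ^ 2 - w + 1 = 0) (ht : (2 - w) * t = 1)
    {r : R} (hr : r ≠ 0) :
    blockDiffs ((baseBlock w t).image (mulFst r)) =
      ((Multiset.range 6).map (r * w ^ ·)).map (·, 0) +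
        ((Multiset.range 6).map (r * w ^ ·)).map (fun y => (y * t, 1)) := by
  have := nontrivial_of_ne r 0 hr
  rw [blockDiffs_image _ (injOn_mulFst_baseBlock hw ht hr), blockDiffs_baseBlock hw ht]
  simp [mulFst, mul_assoc]

variable [Fintype R]

theorem exists_bind_range_mul_pow_eq (hw : w ^ 2 - w + 1 = 0) (ht : (2 - w) * t = 1)
    (h2 : IsUnit (2 : R)) :
    ∃ S : Multiset R, (∀ r ∈ S, r ≠ 0) ∧
      S.bind (fun r => (Multiset.range 6).map (r * w ^ ·)) =
        (Finset.univ.filter fun x : R => x ≠ 0).val := by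
  have hmaps : Set.MapsTo (· * w) ↑(Finset.univ.filter fun x : R => x ≠ 0)
      ↑(Finset.univ.filter fun x : R => x ≠ 0) := fun x hx => by
    simpa using (isUnit_of_sq_sub_add_one_eq_zero hw).mul_left_eq_zero.not.2 (by simpa using hx)
  obtain ⟨S, hS⟩ := Finset.exists_bind_range_iterate_eq_val (by norm_num) _ hmaps fun x hx =>
    minimalPeriod_mul_right_eq_six hw ht h2 (by simpa using hx)
  simp only [mul_right_iterate_apply] at hS
  refine ⟨S, fun r hr => ?_, hS⟩
  have : r ∈ (Finset.univ.filter fun x : R => x ≠ 0).val :=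
    hS ▸ Multiset.mem_bind.2 ⟨r, hr, Multiset.mem_map.2 ⟨0, by simp, by simp⟩⟩
  simpa using this

theorem exists_bind_blockDiffs_eq (hw : w ^ 2 - w + 1 = 0) (h2 : IsUnit (2 : R))
    (h3 : IsUnit (3 : R)) :
    ∃ 𝓑 : Multiset (Finset (R × ZMod 2)), (∀ B ∈ 𝓑, B.card = 4) ∧
      𝓑.bind blockDiffs = (Finset.univ.filter fun p : R × ZMod 2 => p.1 ≠ 0).val := by
  -- `(2 - w) * (w + 1) = 3`
  obtain ⟨t, ht⟩ : ∃ t : R, (2 - w) * t = 1 :=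
    ⟨(w + 1) * ↑h3.unit⁻¹, by linear_combination -(↑h3.unit⁻¹ : R) * hw + h3.mul_val_inv⟩
  obtain ⟨S, hS0, hS⟩ := exists_bind_range_mul_pow_eq hw ht h2
  refine ⟨S.map fun r => (baseBlock w t).image (mulFst r), ?_, ?_⟩
  · simp only [Multiset.mem_map]
    rintro _ ⟨r, hr, rfl⟩
    exact card_image_mulFst_baseBlock hw ht (hS0 r hr)
  rw [Multiset.bind_map,
    Multiset.bind_congr fun r hr => blockDiffs_image_mulFst_baseBlock hw ht (hS0 r hr),
    Multiset.bind_add, ← Multiset.map_bind, ← Multiset.map_bind, hS,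
    Finset.val_filter_fst_ne_zero]
  congr 1
  nth_rw 2 [← Finset.val_map_mul_right_filter_ne_zero (IsUnit.of_mul_eq_one_right _ ht)]
  rw [Multiset.map_map]
  rfl

end SixthRoot

theorem isCDF_of_bind_blockDiffs_eq {g h k : ℕ} [NeZero (g * h)]
    {𝓕 : Multiset (Finset (ZMod (g * h)))} (hcard : ∀ F ∈ 𝓕, F.card = k)
    (hdiffs : 𝓕.bind blockDiffs =
      (Finset.univ.filter fun x => x ∉ AddSubgroup.zmultiples (g : ZMod (g * h))).val) :
    IsCDF g h k 𝓕 := by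
  refine ⟨hcard, fun x hx => ?_, fun x hx => ?_⟩ <;>
    simp [hdiffs, Multiset.count_eq_of_nodup (Finset.nodup _), hx]

theorem mem_zmultiples_iff_chineseRemainder_fst_eq_zero {g : ℕ} (hg : g.Coprime 2)
    (x : ZMod (g * 2)) :
    x ∈ AddSubgroup.zmultiples (g : ZMod (g * 2)) ↔ (ZMod.chineseRemainder hg x).1 = 0 := by
  set e := ZMod.chineseRemainder hg
  have hge : e g = (0, 1) := by
    rw [map_natCast]
    ext
    · exact ZMod.natCast_self g
    · exact (ZMod.natCast_eq_one_iff_odd).2 (Nat.coprime_two_right.1 hg)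
  constructor
  · rintro ⟨k, rfl⟩
    simp [hge]
  · intro hx
    have : x = (e x).2.val • (g : ZMod (g * 2)) := e.injective <| by
      rw [map_nsmul, hge]
      ext <;> simp [hx]
    rw [this]
    exact (AddSubgroup.zmultiples _).nsmul_mem (AddSubgroup.mem_zmultiples _) _

theorem exists_isCDF_of_bind_blockDiffs_eq {g k : ℕ} [NeZero g] (hg : g.Coprime 2)
    {𝓑 : Multiset (Finset (ZMod g × ZMod 2))} (hcard : ∀ B ∈ 𝓑, B.card = k)
    (hdiffs : 𝓑.bind blockDiffs = (Finset.univ.filter fun p : ZMod g × ZMod 2 => p.1 ≠ 0).val) :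
    ∃ 𝓕 : Multiset (Finset (ZMod (g * 2))), IsCDF g 2 k 𝓕 := by
  set ψ := (ZMod.chineseRemainder hg).symm.toAddEquiv
  refine ⟨𝓑.map (Finset.image ψ.toAddMonoidHom), isCDF_of_bind_blockDiffs_eq ?_ ?_⟩
  · simp only [Multiset.mem_map]
    rintro _ ⟨B, hB, rfl⟩
    exact (Finset.card_image_of_injective _ ψ.injective).trans (hcard B hB)
  rw [Multiset.bind_map, Multiset.bind_congr fun B _ =>
    blockDiffs_image ψ.toAddMonoidHom ψ.injective.injOn, ← Multiset.map_bind, hdiffs]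
  calc _ = ((Finset.univ.filter fun p : ZMod g × ZMod 2 => p.1 ≠ 0).map
          ψ.toEquiv.toEmbedding).val := by
        rw [Finset.map_val]; rfl
    _ = _ := by
      congr 1
      ext x
      simp [Finset.mem_map_equiv, mem_zmultiples_iff_chineseRemainder_fst_eq_zero hg, ψ]

theorem stmt_5_general (g : ℕ) (hp : ∀ p : ℕ, p.Prime → p ∣ g → p % 6 = 1) :
    ∃ 𝓕 : Multiset (Finset (ZMod (g * 2))), IsCDF g 2 4 𝓕 := by
  have hcop : ∀ q, q.Prime → q % 6 ≠ 1 → g.Coprime q := fun q hq hq6 =>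
    Nat.coprime_comm.1 <| hq.coprime_iff_not_dvd.2 fun hqg => hq6 (hp q hq hqg)
  have h2g := hcop 2 Nat.prime_two (by norm_num)
  have h3g := hcop 3 Nat.prime_three (by norm_num)
  have : NeZero g := ⟨by rintro rfl; simp at h2g⟩
  obtain ⟨w, hw⟩ := ZMod.exists_sq_sub_add_one_eq_zero hp
  obtain ⟨𝓑, hcard, hdiffs⟩ := exists_bind_blockDiffs_eq hw
    (by simpa using (ZMod.isUnit_iff_coprime 2 g).2 h2g.symm)
    (by simpa using (ZMod.isUnit_iff_coprime 3 g).2 h3g.symm)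
  exact exists_isCDF_of_bind_blockDiffs_eq h2g hcard hdiffs

/-- A `(2g,2,4,1)`-CDF exists for every positive integer `g` all of whose
prime factors are congruent to `1` modulo `6`. -/
theorem stmt_5 (g : ℕ) (hg : 0 < g) (hp : ∀ p : ℕ, p.Prime → p ∣ g → p % 6 = 1) :
    ∃ 𝓕 : Multiset (Finset (ZMod (g * 2))), IsCDF g 2 4 𝓕 :=
  stmt_5_general g hp
end

section
/- There exists a (2g,2,4,1)-CDF for every integer g with g ≡ 1 (mod 6) and 7 ≤ g ≤ 103. -/
/-!
Each case is witnessed by an explicit family of `(g - 1) / 6` base blocks in `ℤ/2gℤ`, whose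
`12 · (g - 1) / 6 = 2g - 2` differences must be exactly the elements outside `H = {0, g}`.
Since `H = g·(ℤ/ghℤ)` consists of the residues whose representative in `[0, gh)` is divisible
by `g`, the CDF conditions become a finite computation on the difference multiset.
-/

theorem ZMod.mem_zmultiples_natCast_iff {n g : ℕ} [NeZero n] (hg : g ∣ n) (x : ZMod n) :
    x ∈ AddSubgroup.zmultiples (g : ZMod n) ↔ g ∣ x.val := by
  rw [AddSubgroup.mem_zmultiples_iff]
  constructor
  · rintro ⟨k, rfl⟩
    rw [zsmul_eq_mul, ← Int.cast_natCast, ← Int.cast_mul, ← Int.natCast_dvd_natCast,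
      ZMod.val_intCast, Int.dvd_iff_emod_eq_zero,
      Int.emod_emod_of_dvd _ (Int.natCast_dvd_natCast.2 hg)]
    exact Int.mul_emod_left _ _
  · rintro ⟨m, hm⟩
    refine ⟨m, ?_⟩
    rw [← ZMod.natCast_zmod_val x, hm, Nat.cast_mul, natCast_zsmul, nsmul_eq_mul, mul_comm]

-- `x.val % g = 0` rather than `g ∣ x.val`: the latter makes `decide` below far slower.
theorem isCDF_iff {g h k : ℕ} [NeZero (g * h)] (𝓕 : Multiset (Finset (ZMod (g * h)))) :
    IsCDF g h k 𝓕 ↔ (∀ F ∈ 𝓕, F.card = k) ∧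
      ∀ x : ZMod (g * h), (𝓕.bind blockDiffs).count x = if x.val % g = 0 then 0 else 1 := by
  simp only [IsCDF, ZMod.mem_zmultiples_natCast_iff (dvd_mul_right g h), Nat.dvd_iff_mod_eq_zero]
  refine and_congr_right fun _ =>
    ⟨fun ⟨hH, hG⟩ x => ?_, fun hcount => ⟨fun x hx => ?_, fun x hx => ?_⟩⟩
  · split_ifs with hx
    exacts [hH x hx, hG x hx]
  · simpa [hx] using hcount x
  · simpa [hx] using hcount x

section

set_option maxRecDepth 4000

theorem isCDF_7_2_4 :
    IsCDF 7 2 4 {{0, 1, 11, 9}} :=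
  (isCDF_iff _).2 ⟨fun F hF => by fin_cases hF; rfl, by decide⟩

theorem isCDF_13_2_4 :
    IsCDF 13 2 4 {{0, 1, 18, 24}, {0, 4, 14, 19}} :=
  (isCDF_iff _).2 ⟨fun F hF => by fin_cases hF <;> rfl, by decide⟩

theorem isCDF_19_2_4 :
    IsCDF 19 2 4 {{0, 1, 3, 29}, {0, 4, 15, 20}, {0, 6, 31, 14}} :=
  (isCDF_iff _).2 ⟨fun F hF => by fin_cases hF <;> rfl, by decide⟩

theorem isCDF_25_2_4 :
    IsCDF 25 2 4 {{0, 1, 30, 45}, {0, 2, 41, 19}, {0, 3, 16, 43}, {0, 4, 18, 42}} :=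
  (isCDF_iff _).2 ⟨fun F hF => by fin_cases hF <;> rfl, by decide⟩

theorem isCDF_31_2_4 :
    IsCDF 31 2 4 {{0, 1, 41, 37}, {0, 2, 44, 34}, {0, 3, 48, 9}, {0, 5, 38, 51}, {0, 7, 15, 50}} :=
  (isCDF_iff _).2 ⟨fun F hF => by fin_cases hF <;> rfl, by decide⟩

theorem isCDF_37_2_4 :
    IsCDF 37 2 4
      {{0, 1, 61, 52}, {0, 2, 47, 43}, {0, 3, 19, 39}, {0, 5, 26, 11}, {0, 7, 57, 49},
        {0, 10, 28, 40}} :=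
  (isCDF_iff _).2 ⟨fun F hF => by fin_cases hF <;> rfl, by decide⟩

theorem isCDF_43_2_4 :
    IsCDF 43 2 4
      {{0, 1, 23, 41}, {0, 2, 6, 15}, {0, 3, 69, 55}, {0, 5, 21, 33}, {0, 7, 44, 54},
        {0, 8, 56, 27}, {0, 11, 35, 61}} :=
  (isCDF_iff _).2 ⟨fun F hF => by fin_cases hF <;> rfl, by decide⟩

theorem isCDF_49_2_4 :
    IsCDF 49 2 4
      {{0, 1, 14, 87}, {0, 2, 76, 36}, {0, 3, 32, 50}, {0, 4, 45, 30}, {0, 5, 82, 43},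
        {0, 6, 23, 67}, {0, 7, 35, 27}, {0, 9, 42, 88}} :=
  (isCDF_iff _).2 ⟨fun F hF => by fin_cases hF <;> rfl, by decide⟩

theorem isCDF_55_2_4 :
    IsCDF 55 2 4
      {{0, 1, 60, 58}, {0, 3, 8, 95}, {0, 4, 25, 86}, {0, 6, 46, 79}, {0, 7, 72, 101},
        {0, 10, 98, 78}, {0, 11, 47, 91}, {0, 13, 67, 84}, {0, 14, 41, 76}} :=
  (isCDF_iff _).2 ⟨fun F hF => by fin_cases hF <;> rfl, by decide⟩

theorem isCDF_61_2_4 :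
    IsCDF 61 2 4
      {{0, 1, 95, 53}, {0, 2, 117, 18}, {0, 3, 86, 82}, {0, 6, 77, 63}, {0, 8, 29, 96},
        {0, 9, 111, 24}, {0, 10, 54, 76}, {0, 12, 84, 37}, {0, 13, 73, 103}, {0, 17, 91, 58}} :=
  (isCDF_iff _).2 ⟨fun F hF => by fin_cases hF <;> rfl, by decide⟩

theorem isCDF_67_2_4 :
    IsCDF 67 2 4
      {{0, 1, 127, 113}, {0, 2, 31, 83}, {0, 3, 39, 109}, {0, 4, 17, 96}, {0, 5, 68, 74},
        {0, 9, 100, 85}, {0, 10, 33, 90}, {0, 11, 56, 97}, {0, 12, 62, 30}, {0, 16, 115, 40},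
        {0, 20, 47, 108}} :=
  (isCDF_iff _).2 ⟨fun F hF => by fin_cases hF <;> rfl, by decide⟩

theorem isCDF_73_2_4 :
    IsCDF 73 2 4
      {{0, 1, 32, 93}, {0, 2, 98, 102}, {0, 3, 12, 41}, {0, 5, 57, 81}, {0, 6, 110, 129},
        {0, 7, 87, 132}, {0, 8, 26, 51}, {0, 10, 77, 116}, {0, 11, 27, 83}, {0, 13, 84, 112},
        {0, 15, 37, 97}, {0, 20, 55, 88}} :=
  (isCDF_iff _).2 ⟨fun F hF => by fin_cases hF <;> rfl, by decide⟩

theorem isCDF_79_2_4 :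
    IsCDF 79 2 4
      {{0, 1, 35, 85}, {0, 2, 129, 132}, {0, 4, 67, 121}, {0, 5, 70, 141}, {0, 6, 20, 139},
        {0, 7, 66, 122}, {0, 8, 46, 114}, {0, 9, 86, 146}, {0, 10, 110, 128}, {0, 11, 62, 145},
        {0, 15, 47, 116}, {0, 16, 61, 125}, {0, 23, 78, 105}} :=
  (isCDF_iff _).2 ⟨fun F hF => by fin_cases hF <;> rfl, by decide⟩

theorem isCDF_85_2_4 :
    IsCDF 85 2 4
      {{0, 1, 115, 139}, {0, 2, 96, 131}, {0, 3, 67, 125}, {0, 4, 157, 165}, {0, 6, 97, 148},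
        {0, 7, 27, 117}, {0, 10, 121, 151}, {0, 11, 23, 88}, {0, 14, 61, 101}, {0, 15, 52, 78},
        {0, 16, 86, 120}, {0, 18, 62, 134}, {0, 21, 46, 89}, {0, 33, 75, 132}} :=
  (isCDF_iff _).2 ⟨fun F hF => by fin_cases hF <;> rfl, by decide⟩

theorem isCDF_91_2_4 :
    IsCDF 91 2 4
      {{0, 1, 143, 178}, {0, 2, 132, 153}, {0, 3, 16, 128}, {0, 6, 34, 115}, {0, 7, 127, 165},
        {0, 8, 66, 84}, {0, 9, 103, 159}, {0, 10, 46, 93}, {0, 11, 108, 134}, {0, 12, 90, 133},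
        {0, 14, 82, 145}, {0, 15, 80, 110}, {0, 19, 64, 141}, {0, 20, 53, 160},
        {0, 25, 111, 138}} :=
  (isCDF_iff _).2 ⟨fun F hF => by fin_cases hF <;> rfl, by decide⟩

theorem isCDF_97_2_4 :
    IsCDF 97 2 4
      {{0, 1, 93, 170}, {0, 2, 108, 114}, {0, 3, 15, 168}, {0, 4, 60, 73}, {0, 5, 58, 171},
        {0, 7, 142, 152}, {0, 8, 74, 95}, {0, 9, 55, 98}, {0, 11, 48, 83}, {0, 14, 75, 178},
        {0, 17, 79, 143}, {0, 18, 40, 158}, {0, 19, 63, 163}, {0, 20, 47, 85}, {0, 32, 110, 155},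
        {0, 33, 67, 137}} :=
  (isCDF_iff _).2 ⟨fun F hF => by fin_cases hF <;> rfl, by decide⟩

theorem isCDF_103_2_4 :
    IsCDF 103 2 4
      {{0, 1, 18, 81}, {0, 2, 186, 198}, {0, 3, 82, 117}, {0, 4, 112, 123}, {0, 5, 38, 77},
        {0, 6, 122, 153}, {0, 7, 28, 74}, {0, 9, 95, 146}, {0, 13, 115, 151}, {0, 14, 43, 164},
        {0, 15, 52, 145}, {0, 16, 41, 182}, {0, 19, 64, 152}, {0, 23, 70, 179}, {0, 26, 75, 174},
        {0, 30, 101, 158}, {0, 34, 96, 140}} :=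
  (isCDF_iff _).2 ⟨fun F hF => by fin_cases hF <;> rfl, by decide⟩

end

/-- A `(2g,2,4,1)`-CDF exists for every integer `g ≡ 1 (mod 6)` with `7 ≤ g ≤ 103`. -/
theorem stmt_7 (g : ℕ) (hmod : g % 6 = 1) (h1 : 7 ≤ g) (h2 : g ≤ 103) :
    ∃ 𝓕 : Multiset (Finset (ZMod (g * 2))), IsCDF g 2 4 𝓕 := by
  obtain ⟨m, rfl⟩ : ∃ m, g = 6 * m + 1 := ⟨g / 6, by omega⟩
  obtain ⟨hm1, hm17⟩ : 1 ≤ m ∧ m ≤ 17 := by omega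
  interval_cases m
  exacts [⟨_, isCDF_7_2_4⟩, ⟨_, isCDF_13_2_4⟩, ⟨_, isCDF_19_2_4⟩, ⟨_, isCDF_25_2_4⟩,
    ⟨_, isCDF_31_2_4⟩, ⟨_, isCDF_37_2_4⟩, ⟨_, isCDF_43_2_4⟩, ⟨_, isCDF_49_2_4⟩, ⟨_, isCDF_55_2_4⟩,
    ⟨_, isCDF_61_2_4⟩, ⟨_, isCDF_67_2_4⟩, ⟨_, isCDF_73_2_4⟩, ⟨_, isCDF_79_2_4⟩, ⟨_, isCDF_85_2_4⟩,
    ⟨_, isCDF_91_2_4⟩, ⟨_, isCDF_97_2_4⟩, ⟨_, isCDF_103_2_4⟩]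
end

section
/- For every positive integer h, there does not exist a (4h,h,4,1)-CDF. -/
/-!
Reduce modulo `g`. No difference of a base block lies in `H = g·ℤ_{gh}`, the kernel of
`ℤ_{gh} → ℤ_g`, so a base block of size `g` meets every coset of `H` exactly once. Its
differences lying in a coset `u + H` are then `a - σ a` for a permutation `σ` of the block, and
they sum to `0`. Since every element of a coset `u + H ≠ H` occurs exactly once as a difference,
the elements of every such coset sum to `0`. For `g ≥ 3` both `1 + H` and `2 + H = (1 + H) + 1`
are such cosets, yet their sums differ by `|1 + H| · 1`, and `0 < |1 + H| < gh`.
-/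

open Finset

lemma card_filter_eq_one_of_injOn {α β : Type*} [DecidableEq β] [Fintype β] {f : α → β}
    {s : Finset α} (hf : Set.InjOn f s) (hs : #s = Fintype.card β) (b : β) :
    #{a ∈ s | f a = b} = 1 := by
  have himage : s.image f = univ :=
    eq_univ_of_card _ ((card_image_of_injOn hf).trans hs)
  obtain ⟨a, ha, rfl⟩ := mem_image.mp (himage ▸ mem_univ b)
  refine card_eq_one.mpr ⟨a, eq_singleton_iff_unique_mem.mpr ⟨mem_filter.mpr ⟨ha, rfl⟩, ?_⟩⟩
  exact fun c hc => hf (mem_filter.mp hc).1 ha (mem_filter.mp hc).2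

lemma Multiset.filter_eq_val_of_count_eq_one {α : Type*} [DecidableEq α] [Fintype α]
    (m : Multiset α) (p : α → Prop) [DecidablePred p] (hm : ∀ x, p x → m.count x = 1) :
    m.filter p = ({x | p x} : Finset α).val := by
  ext x
  rw [Multiset.count_filter]
  split_ifs with hx
  · rw [hm x hx, Multiset.count_eq_one_of_mem (nodup _) (by simpa using hx)]
  · rw [Multiset.count_eq_zero_of_notMem (by simpa using hx)]

lemma sum_fiber_add_eq_sum_add {G Q : Type*} [AddCommGroup G] [Fintype G] [AddCommGroup Q]
    [DecidableEq Q] (π : G →+ Q) (u : Q) (t : G) :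
    ∑ x with π x = u + π t, x = ∑ x with π x = u, (x + t) := by
  refine (sum_nbij' (· + t) (· - t) ?_ ?_ ?_ ?_ ?_).symm <;> simp [sub_eq_iff_eq_add]

lemma ZMod.sum_add_one_ne {n : ℕ} [NeZero n] {s : Finset (ZMod n)} (hs : s.Nonempty)
    {a : ZMod n} (ha : a ∉ s) : ∑ x ∈ s, (x + 1) ≠ ∑ x ∈ s, x := by
  rw [sum_add_distrib, sum_const, nsmul_one, ne_eq, add_eq_left, ZMod.natCast_eq_zero_iff]
  refine Nat.not_dvd_of_pos_of_lt hs.card_pos ?_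
  simpa using card_lt_univ_of_notMem ha

section Transversal

variable {G Q : Type*} [AddCommGroup G] [DecidableEq G] [AddCommGroup Q]

lemma sub_mem_blockDiffs {F : Finset G} {a b : G} (ha : a ∈ F) (hb : b ∈ F) (hab : a ≠ b) :
    a - b ∈ blockDiffs F :=
  Multiset.mem_map.mpr ⟨(a, b), by simpa using ⟨⟨ha, hb⟩, hab⟩, rfl⟩

lemma injOn_of_map_blockDiffs_ne_zero (π : G →+ Q) {F : Finset G}
    (hF : ∀ d ∈ blockDiffs F, π d ≠ 0) : Set.InjOn π F := by
  intro a ha b hb hab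
  by_contra hne
  exact hF _ (sub_mem_blockDiffs ha hb hne) (by rw [map_sub, hab, sub_self])

lemma sum_filter_blockDiffs_eq_zero [DecidableEq Q] (π : G →+ Q) {F : Finset G}
    (hF : ∀ q, #{a ∈ F | π a = q} = 1) (u : Q) :
    ((blockDiffs F).filter (π · = u)).sum = 0 := by
  have hsum : ((blockDiffs F).filter (π · = u)).sum
      = ∑ p ∈ F ×ˢ F with π p.1 = π p.2 + u, (p.1 - p.2) := by
    -- the condition `a ≠ b` in `blockDiffs` can be dropped: diagonal pairs contribute `0`
    rw [blockDiffs, Multiset.filter_map, ← filter_val, filter_filter, ← sum_eq_multiset_sum]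
    simp only [sum_filter]
    refine sum_congr rfl fun p _ => ?_
    by_cases hp : p.1 = p.2
    · simp [hp]
    · simp [hp, eq_comm, ← sub_eq_iff_eq_add']
  have hleft : ∑ p ∈ F ×ˢ F with π p.1 = π p.2 + u, p.1 = ∑ a ∈ F, a := by
    rw [sum_filter, sum_product]
    refine sum_congr rfl fun a _ => ?_
    simp_rw [← eq_sub_iff_add_eq.trans eq_comm]
    rw [← sum_filter, sum_const, hF, one_smul]
  have hright : ∑ p ∈ F ×ˢ F with π p.1 = π p.2 + u, p.2 = ∑ b ∈ F, b := by
    rw [sum_filter, sum_product_right]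
    refine sum_congr rfl fun b _ => ?_
    dsimp only
    rw [← sum_filter, sum_const, hF, one_smul]
  rw [hsum, sum_sub_distrib, hleft, hright, sub_self]

lemma sum_filter_bind_blockDiffs_eq_zero [DecidableEq Q] (π : G →+ Q) (𝓕 : Multiset (Finset G))
    (h𝓕 : ∀ F ∈ 𝓕, ∀ q, #{a ∈ F | π a = q} = 1) (u : Q) :
    ((𝓕.bind blockDiffs).filter (π · = u)).sum = 0 := by
  rw [Multiset.filter_bind, Multiset.sum_bind]
  refine Multiset.sum_eq_zero fun x hx => ?_
  obtain ⟨F, hF, rfl⟩ := Multiset.mem_map.mp hx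
  exact sum_filter_blockDiffs_eq_zero π (h𝓕 F hF) u

lemma sum_fiber_eq_zero [Fintype G] [DecidableEq Q] (π : G →+ Q) (𝓕 : Multiset (Finset G))
    (h𝓕 : ∀ F ∈ 𝓕, ∀ q, #{a ∈ F | π a = q} = 1) {u : Q}
    (hu : ∀ x, π x = u → (𝓕.bind blockDiffs).count x = 1) :
    ∑ x with π x = u, x = 0 := by
  rw [← sum_filter_bind_blockDiffs_eq_zero π 𝓕 h𝓕 u,
    Multiset.filter_eq_val_of_count_eq_one _ _ hu, sum_val]
  rfl

end Transversal

lemma ZMod.castHom_eq_zero_iff_mem_zmultiples {m g : ℕ} [NeZero m] (hg : g ∣ m) (x : ZMod m) :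
    ZMod.castHom hg (ZMod g) x = 0 ↔ x ∈ AddSubgroup.zmultiples (g : ZMod m) := by
  constructor
  · intro hx
    rw [← ZMod.natCast_zmod_val x, map_natCast, ZMod.natCast_eq_zero_iff] at hx
    obtain ⟨c, hc⟩ := hx
    rw [← ZMod.natCast_zmod_val x, hc, Nat.cast_mul, mul_comm, ← nsmul_eq_mul]
    exact AddSubgroup.nsmul_mem _ (AddSubgroup.mem_zmultiples _) c
  · rintro ⟨c, rfl⟩
    rw [map_zsmul, map_natCast, ZMod.natCast_self, smul_zero]

lemma IsCDF.card_filter_castHom_eq_one {g h : ℕ} [NeZero g] [NeZero (g * h)]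
    {𝓕 : Multiset (Finset (ZMod (g * h)))} (h𝓕 : IsCDF g h g 𝓕) :
    ∀ F ∈ 𝓕, ∀ q, #{a ∈ F | ZMod.castHom (dvd_mul_right g h) (ZMod g) a = q} = 1 := by
  intro F hF
  refine card_filter_eq_one_of_injOn ?_ (by rw [ZMod.card, h𝓕.1 F hF])
  refine injOn_of_map_blockDiffs_ne_zero (ZMod.castHom (dvd_mul_right g h) (ZMod g)).toAddMonoidHom
    fun d hd hd0 => ?_
  have hcount := h𝓕.2.1 d ((ZMod.castHom_eq_zero_iff_mem_zmultiples (dvd_mul_right g h) d).mp hd0)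
  exact Multiset.count_eq_zero.mp hcount (Multiset.mem_bind.mpr ⟨F, hF, hd⟩)

theorem not_exists_isCDF_self (g h : ℕ) (hg : 3 ≤ g) (hh : 0 < h) :
    ¬ ∃ 𝓕 : Multiset (Finset (ZMod (g * h))), IsCDF g h g 𝓕 := by
  rintro ⟨𝓕, h𝓕⟩
  have : NeZero g := ⟨by omega⟩
  have : NeZero (g * h) := ⟨by positivity⟩
  set π := (ZMod.castHom (dvd_mul_right g h) (ZMod g)).toAddMonoidHom
  have hπ1 : π 1 = 1 := map_one (ZMod.castHom (dvd_mul_right g h) (ZMod g))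
  have hfiber (u : ZMod g) (hu : u ≠ 0) : ∑ x with π x = u, x = 0 :=
    sum_fiber_eq_zero π 𝓕 h𝓕.card_filter_castHom_eq_one fun x hx => h𝓕.2.2 x fun hmem =>
      hu (hx ▸ (ZMod.castHom_eq_zero_iff_mem_zmultiples (dvd_mul_right g h) x).mpr hmem)
  have hnat_ne_zero (k : ℕ) (hk : 0 < k) (hkg : k < g) : (k : ZMod g) ≠ 0 :=
    (ZMod.natCast_eq_zero_iff k g).not.mpr (Nat.not_dvd_of_pos_of_lt hk hkg)
  have h1 : (1 : ZMod g) ≠ 0 := by exact_mod_cast hnat_ne_zero 1 one_pos (by omega)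
  have h2 : (1 + 1 : ZMod g) ≠ 0 := by exact_mod_cast hnat_ne_zero 2 two_pos (by omega)
  refine ZMod.sum_add_one_ne (s := {x | π x = 1}) ⟨1, by simp [hπ1]⟩ (a := 0)
    (by simpa using h1.symm) ?_
  rw [← sum_fiber_add_eq_sum_add, hπ1, hfiber _ h1, hfiber _ h2]

/-- For every positive integer `h`, there is no `(4h,h,4,1)`-CDF. -/
theorem stmt_13 (h : ℕ) (hh : 0 < h) :
    ¬ ∃ 𝓕 : Multiset (Finset (ZMod (4 * h))), IsCDF 4 h 4 𝓕 :=
  not_exists_isCDF_self 4 h (by norm_num) hh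
end

section
/- For every positive integer n, every cyclic (n,6,4)_3 code has at most C(n) codewords, where C(n) = n·⌊(n−1)/6⌋ if n is odd or n ≡ 2 (mod 6), and C(n) = n·⌊(n−1)/6⌋ + n/2 if n ≡ 0 or 4 (mod 6). -/
/-- A cyclic ternary constant-weight code of length `n`, weight `4` and minimum
distance `6`: a set of vectors in `{0,1,2}^n` (coordinates indexed by `Z_n`),
each of Hamming weight exactly `4`, pairwise at Hamming distance at least `6`,
and closed under the cyclic shift. -/
def IsCyclicCode643 (n : ℕ) [NeZero n] (𝓒 : Set (ZMod n → Fin 3)) : Prop :=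
  (∀ u ∈ 𝓒, (Finset.univ.filter fun i => u i ≠ 0).card = 4) ∧
  (∀ u ∈ 𝓒, ∀ v ∈ 𝓒, u ≠ v → 6 ≤ hammingDist u v) ∧
  (∀ u ∈ 𝓒, (fun i => u (i + 1)) ∈ 𝓒)

/-- The upper bound `C(n)` on the size of a cyclic `(n,6,4)_3` code. -/
def codeBound (n : ℕ) : ℕ :=
  if Odd n ∨ n % 6 = 2 then n * ((n - 1) / 6) else n * ((n - 1) / 6) + n / 2

/-! Two codewords of weight 4 that agree on a nonzero coordinate `i` and share a second support
point are at distance at most 5. Hence, for each nonzero value `a`, the codewords with `u i = a`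
have pairwise disjoint supports outside `i`, so there are at most `(n - 1) / 3` of them, and at
most `X ≤ 2 ((n - 1) / 3)` codewords are nonzero at `i`. By cyclicity `X` does not depend on `i`,
so counting nonzero entries gives `4 |C| = n X`; for odd `n` this forces `4 ∣ X`, which yields
the sharper bound. -/

open Finset

section Hamming

variable {ι β : Type*} [Fintype ι] [DecidableEq ι] [Zero β] [DecidableEq β]

theorem hammingDist_add_three_le {u v : ι → β} {i j : ι} (hij : i ≠ j) (hi : u i = v i)
    (hui : u i ≠ 0) (huj : u j ≠ 0) (hvj : v j ≠ 0) :
    hammingDist u v + 3 ≤ hammingNorm u + hammingNorm v := by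
  set su : Finset ι := {k | u k ≠ 0}
  set sv : Finset ι := {k | v k ≠ 0}
  have hdiff : ({k | u k ≠ v k} : Finset ι) ⊆ (su ∪ sv).erase i := by
    intro k hk
    simp only [su, sv, mem_filter, mem_univ, true_and, mem_erase, mem_union] at hk ⊢
    refine ⟨fun hki => hk (hki ▸ hi), ?_⟩
    by_contra! h
    exact hk (h.1.trans h.2.symm)
  have hinter : {i, j} ⊆ su ∩ sv := by
    intro k hk
    simp only [mem_insert, mem_singleton] at hk
    rcases hk with rfl | rfl <;> simp_all [su, sv]
  have hi_mem : i ∈ su ∪ sv := mem_union_left _ (by simpa [su] using hui)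
  have hdiff_card := card_le_card hdiff
  rw [card_erase_of_mem hi_mem] at hdiff_card
  have hinter_card := card_le_card hinter
  rw [card_pair hij] at hinter_card
  have hunion_pos := card_pos.mpr ⟨i, hi_mem⟩
  have := card_union_add_card_inter su sv
  change #{k | u k ≠ v k} + 3 ≤ #su + #sv
  omega

end Hamming

section Code

variable {ι β : Type*} [Fintype ι] [DecidableEq ι] [Zero β] [DecidableEq β]
  {C : Finset (ι → β)}

theorem card_filter_apply_eq_and_apply_ne_zero_le_one (hw : ∀ u ∈ C, hammingNorm u = 4)
    (hd : ∀ u ∈ C, ∀ v ∈ C, u ≠ v → 6 ≤ hammingDist u v) {i j : ι} (hij : i ≠ j) {a : β}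
    (ha : a ≠ 0) : #{u ∈ C | u i = a ∧ u j ≠ 0} ≤ 1 := by
  refine card_le_one.mpr fun u hu v hv => ?_
  simp only [mem_filter] at hu hv
  by_contra huv
  have := hammingDist_add_three_le hij (hu.2.1.trans hv.2.1.symm) (hu.2.1 ▸ ha) hu.2.2 hv.2.2
  have := hd u hu.1 v hv.1 huv
  rw [hw u hu.1, hw v hv.1] at *
  omega

theorem card_filter_apply_eq_mul_three_le (hw : ∀ u ∈ C, hammingNorm u = 4)
    (hd : ∀ u ∈ C, ∀ v ∈ C, u ≠ v → 6 ≤ hammingDist u v) (i : ι) {a : β} (ha : a ≠ 0) :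
    #{u ∈ C | u i = a} * 3 ≤ Fintype.card ι - 1 := by
  have hcount := card_mul_le_card_mul (fun u j => u j ≠ 0) (s := {u ∈ C | u i = a})
    (t := univ.erase i) (m := 3) (n := 1) ?_ ?_
  · simpa using hcount
  · intro u hu
    simp only [mem_filter] at hu
    have hi : i ∈ ({j | u j ≠ 0} : Finset ι) := by simp [hu.2, ha]
    rw [bipartiteAbove, filter_erase, card_erase_of_mem hi]
    exact (congrArg (· - 1) (hw u hu.1)).ge
  · intro j hj
    rw [bipartiteBelow, filter_filter]
    exact card_filter_apply_eq_and_apply_ne_zero_le_one hw hd (ne_of_mem_erase hj).symm ha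

end Code

theorem card_filter_apply_ne_zero_le {ι : Type*} [Fintype ι] [DecidableEq ι]
    {C : Finset (ι → Fin 3)} (hw : ∀ u ∈ C, hammingNorm u = 4)
    (hd : ∀ u ∈ C, ∀ v ∈ C, u ≠ v → 6 ≤ hammingDist u v) (i : ι) :
    #{u ∈ C | u i ≠ 0} ≤ 2 * ((Fintype.card ι - 1) / 3) := by
  have hsplit : {u ∈ C | u i ≠ 0} ⊆ {u ∈ C | u i = 1} ∪ {u ∈ C | u i = 2} := by
    intro u
    simp only [mem_filter, mem_union]
    generalize u i = x
    fin_cases x <;> simp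
  have h1 := card_filter_apply_eq_mul_three_le hw hd i one_ne_zero
  have h2 := card_filter_apply_eq_mul_three_le hw hd i (a := (2 : Fin 3)) (by decide)
  have := (card_le_card hsplit).trans (card_union_le _ _)
  omega

section Cyclic

variable {n : ℕ} [NeZero n] {β : Type*} {C : Finset (ZMod n → β)}

theorem shift_mem_of_forall_shift_one_mem (hcl : ∀ u ∈ C, (fun j => u (j + 1)) ∈ C)
    (a : ZMod n) {u : ZMod n → β} (hu : u ∈ C) : (fun j => u (j + a)) ∈ C := by
  suffices h : ∀ k : ℕ, ∀ u ∈ C, (fun j => u (j + k)) ∈ C by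
    simpa using h a.val u hu
  intro k
  induction k with
  | zero => simp
  | succ k ih =>
    intro u hu
    simpa [add_assoc] using ih _ (hcl u hu)

variable [Zero β] [DecidableEq β]

theorem card_filter_apply_ne_zero_eq (hcl : ∀ u ∈ C, (fun j => u (j + 1)) ∈ C) (i : ZMod n) :
    #{u ∈ C | u i ≠ 0} = #{u ∈ C | u 0 ≠ 0} := by
  refine card_nbij' (fun u j => u (j + i)) (fun u j => u (j - i)) ?_ ?_ ?_ ?_
  · intro u hu
    rw [mem_coe, mem_filter] at hu ⊢
    exact ⟨shift_mem_of_forall_shift_one_mem hcl i hu.1, by simpa using hu.2⟩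
  · intro u hu
    rw [mem_coe, mem_filter] at hu ⊢
    exact ⟨by simpa [sub_eq_add_neg] using shift_mem_of_forall_shift_one_mem hcl (-i) hu.1,
      by simpa using hu.2⟩
  · intro u _
    simp
  · intro u _
    simp

theorem card_mul_eq_mul_card_filter_apply_zero_ne_zero
    (hcl : ∀ u ∈ C, (fun j => u (j + 1)) ∈ C) {w : ℕ} (hw : ∀ u ∈ C, hammingNorm u = w) :
    #C * w = n * #{u ∈ C | u 0 ≠ 0} := by
  have hcount := card_mul_eq_card_mul (fun (u : ZMod n → β) j => u j ≠ 0) (s := C) (t := univ)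
    (fun u hu => hw u hu) (fun i _ => card_filter_apply_ne_zero_eq hcl i)
  simpa using hcount

end Cyclic

theorem le_codeBound_of_mul_four_eq {n c X : ℕ} (hX : X ≤ 2 * ((n - 1) / 3))
    (h : c * 4 = n * X) : c ≤ codeBound n := by
  unfold codeBound
  split_ifs with hn
  · rcases hn with hodd | hn
    · obtain ⟨s, rfl⟩ : 4 ∣ X := by
        have hcop : Nat.Coprime 4 n := by
          simpa using (Nat.coprime_two_left.mpr hodd).pow_left 2
        exact hcop.dvd_of_dvd_mul_left ⟨c, by rw [← h, mul_comm]⟩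
      have hc : c = n * s := Nat.eq_of_mul_eq_mul_right (by norm_num : 0 < 4) (by rw [h]; ring)
      exact hc ▸ Nat.mul_le_mul_left n (by omega)
    · refine Nat.le_of_mul_le_mul_right (c := 4) ?_ (by norm_num)
      calc c * 4 = n * X := h
        _ ≤ n * (4 * ((n - 1) / 6)) := Nat.mul_le_mul_left n (by omega)
        _ = n * ((n - 1) / 6) * 4 := by ring
  · obtain ⟨m, rfl⟩ : Even n := Nat.not_odd_iff_even.mp fun h => hn (Or.inl h)
    refine Nat.le_of_mul_le_mul_right (c := 4) ?_ (by norm_num)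
    calc c * 4 = (m + m) * X := h
      _ ≤ (m + m) * (4 * ((m + m - 1) / 6) + 2) := Nat.mul_le_mul_left _ (by omega)
      _ = ((m + m) * ((m + m - 1) / 6) + (m + m) / 2) * 4 := by
        rw [show (m + m) / 2 = m by omega]; ring

/-- Every cyclic `(n,6,4)_3` code has at most `C(n)` codewords. -/
theorem stmt_18 (n : ℕ) [NeZero n] (𝓒 : Set (ZMod n → Fin 3))
    (h𝓒 : IsCyclicCode643 n 𝓒) : 𝓒.ncard ≤ codeBound n := by
  obtain ⟨C, rfl⟩ := 𝓒.toFinite.exists_finset_coe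
  obtain ⟨hw, hd, hcl⟩ := h𝓒
  rw [Set.ncard_coe_finset]
  refine le_codeBound_of_mul_four_eq ?_ (card_mul_eq_mul_card_filter_apply_zero_ne_zero hcl hw)
  simpa using card_filter_apply_ne_zero_le hw hd 0
end
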